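/- For any real number θ, the set Bad⁺_θ := {x ∈ ℝ : ∃ c > 0 such that for every natural number q ≥ 1, ‖θq − x‖_ℤ ≥ c/q} is an 1/8-winning set for Schmidt's game on ℝ. -/

import Mathlib

/-- `normZ x = ‖x‖_ℤ` is the distance from `x` to the nearest integer. -/
noncomputable def normZ (x : ℝ) : ℝ := ⨅ p : ℤ, |x - (p : ℝ)|

/-- `Bad⁺_θ`: the set of `x` such that for some `c > 0`,
`‖θq − x‖_ℤ ≥ c/q` for all natural numbers `q ≥ 1`. -/
def BadPlus (θ : ℝ) : Set ℝ :=
  {x : ℝ | ∃ c > 0, ∀ q : ℕ, 1 ≤ q → normZ (θ * q - x) ≥ c / q}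

/-- A pair `(c, r)` represents the closed ball of center `c` and radius `r` in `ℝ`. -/
def ballOf (B : ℝ × ℝ) : Set ℝ := Metric.closedBall B.1 B.2

/-- `S` is `(α,β)`-winning for Schmidt's game on `ℝ`: White has a strategy `f`
(assigning to each finite history of Black's moves a ball) such that, whenever Black
plays legally (the initial Black ball has positive radius, and each subsequent Black
ball is contained in the previous White ball and has radius `β` times that of the
White ball), White's moves are legal (each White ball is contained in the current
Black ball and has radius `α` times that of the Black ball) and the intersection of
all the balls lies in `S`. -/
def SchmidtWinning (α β : ℝ) (S : Set ℝ) : Prop :=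
  ∃ f : List (ℝ × ℝ) → ℝ × ℝ,
    ∀ B : ℕ → ℝ × ℝ,
      (0 < (B 0).2) →
      (∀ n : ℕ,
        (B (n + 1)).2 = β * (f (List.ofFn (fun i : Fin (n + 1) => B i))).2 ∧
        ballOf (B (n + 1)) ⊆ ballOf (f (List.ofFn (fun i : Fin (n + 1) => B i)))) →
      ((∀ n : ℕ,
        (f (List.ofFn (fun i : Fin (n + 1) => B i))).2 = α * (B n).2 ∧
        ballOf (f (List.ofFn (fun i : Fin (n + 1) => B i))) ⊆ ballOf (B n)) ∧
        (⋂ n : ℕ, ballOf (B n)) ⊆ S)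

/-- `S` is `α`-winning if it is `(α,β)`-winning for every `β` with `0 < β < 1`. -/
def SchmidtAlphaWinning (α : ℝ) (S : Set ℝ) : Prop :=
  ∀ β : ℝ, 0 < β → β < 1 → SchmidtWinning α β S

/-!
White dodges: from a Black ball of radius `r` it moves to the end of the ball (radius `r/8`) away
from the only point near the centre of the `5r`-separated set of the `θk - p` with `‖θj‖ ≥ 5r`
for all `0 < j ≤ k`. As the radii shrink geometrically, every scale `s ≤ 1` is met by some radius
`≍ s`, so the outcome `x` stays at distance `≳ s` from the points `θk - p`, `k < N`, whenever
these are `s`-separated.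

For `q ≥ 1` let `A ≤ q` be the first minimiser of `‖θk‖` on `[1, q]`; a determinant argument
gives `‖θk‖ ≥ 1/(2A)` for `0 < k < A`. Writing `q = tA + s` with `s < A`, the point `θq - p` is a
point `θs - p'`, at distance `≳ 1/A` from `x`, moved by `t(θA - round θA)`. If `t‖θA‖` is small this gives
`‖θq - x‖ ≳ 1/A ≥ 1/q`; otherwise `q‖θA‖ ≥ tA‖θA‖ ≳ 1`, and the `‖θA‖`-separation of the points
`θk - p`, `k ≤ q`, gives `‖θq - x‖ ≳ ‖θA‖ ≳ 1/q`.
-/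

lemma normZ_eq_abs_sub_round (x : ℝ) : normZ x = |x - round x| :=
  le_antisymm (ciInf_le ⟨0, by rintro _ ⟨p, rfl⟩; positivity⟩ (round x)) (le_ciInf (round_le x))

lemma normZ_le_abs_sub (x : ℝ) (p : ℤ) : normZ x ≤ |x - p| :=
  (normZ_eq_abs_sub_round x).trans_le (round_le x p)

lemma normZ_le_one (x : ℝ) : normZ x ≤ 1 := by
  rw [normZ_eq_abs_sub_round]
  linarith [abs_sub_round x]

lemma one_le_abs_intCast {z : ℤ} (hz : z ≠ 0) : (1 : ℝ) ≤ |(z : ℝ)| := by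
  exact_mod_cast Int.one_le_abs hz

section BestApproximation

variable {θ : ℝ}

lemma exists_best_approximation_le (θ : ℝ) {N : ℕ} (hN : 0 < N) :
    ∃ A, 0 < A ∧ A ≤ N ∧ (∀ k, 0 < k → k ≤ N → normZ (θ * A) ≤ normZ (θ * k)) ∧
      ∀ k, 0 < k → k < A → normZ (θ * A) < normZ (θ * k) := by
  classical
  have hex : ∃ A, 0 < A ∧ A ≤ N ∧ ∀ k, 0 < k → k ≤ N → normZ (θ * A) ≤ normZ (θ * k) := by
    obtain ⟨A, hA, hAmin⟩ := (Finset.Icc 1 N).exists_min_image (fun k : ℕ => normZ (θ * k))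
      ⟨1, Finset.mem_Icc.2 ⟨le_rfl, hN⟩⟩
    rw [Finset.mem_Icc] at hA
    exact ⟨A, hA.1, hA.2, fun k hk hkN => hAmin k (Finset.mem_Icc.2 ⟨hk, hkN⟩)⟩
  obtain ⟨hA0, hAN, hAmin⟩ := Nat.find_spec hex
  refine ⟨Nat.find hex, hA0, hAN, hAmin, fun k hk hkA => ?_⟩
  by_contra! hle
  exact Nat.find_min hex hkA ⟨hk, hkA.le.trans hAN, fun j hj hjN => hle.trans (hAmin j hj hjN)⟩

/-- Minimality of `‖θA‖` at `B - A` puts `θA` and `θB` on opposite sides of their nearest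
integers, so the integer `A round(θB) - B round(θA)` is nonzero and at most `2B‖θA‖` in size. -/
lemma one_le_two_mul_normZ_of_minimizer {A B : ℕ} (hA : 0 < A) (hAB : A < B)
    (hAmin : ∀ k, 0 < k → k < B → normZ (θ * A) ≤ normZ (θ * k))
    (hB : normZ (θ * B) < normZ (θ * A)) : 1 ≤ 2 * B * normZ (θ * A) := by
  set a := θ * A - round (θ * A)
  set b := θ * B - round (θ * B)
  have ha : normZ (θ * A) = |a| := normZ_eq_abs_sub_round _
  have hb : normZ (θ * B) = |b| := normZ_eq_abs_sub_round _
  rw [ha, hb] at hB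
  rw [ha] at hAmin ⊢
  have hab : a * b ≤ 0 := by
    by_contra! hpos
    have hBA : |a| ≤ normZ (θ * (B - A : ℕ)) := hAmin _ (by omega) (by omega)
    have hBA' : normZ (θ * (B - A : ℕ)) ≤ |b - a| := by
      convert normZ_le_abs_sub (θ * (B - A : ℕ)) (round (θ * B) - round (θ * A)) using 2
      push_cast [Nat.cast_sub hAB.le]
      ring
    have : |b - a| < |a| := by
      have hab' : |a| * |b| = a * b := by rw [← abs_mul, abs_of_pos hpos]
      rw [← sq_lt_sq]
      nlinarith [sq_abs a, sq_abs b, abs_pos.2 (right_ne_zero_of_mul hpos.ne')]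
    linarith
  have hD : ((A * round (θ * B) - B * round (θ * A) : ℤ) : ℝ) = B * a - A * b := by
    push_cast
    ring
  have ha0 : a ≠ 0 := abs_pos.1 ((abs_nonneg b).trans_lt hB)
  have hBpos : (0 : ℝ) < B := by exact_mod_cast hA.trans hAB
  have hAB' : (A : ℝ) ≤ B := by exact_mod_cast hAB.le
  have habs : |(B : ℝ) * a - A * b| = B * |a| + A * |b| := by
    rcases ha0.lt_or_gt with ha0 | ha0
    · have hb0 : 0 ≤ b := nonneg_of_mul_nonpos_right hab ha0
      rw [abs_of_neg ha0, abs_of_nonneg hb0, abs_of_nonpos (by nlinarith)]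
      ring
    · have hb0 : b ≤ 0 := nonpos_of_mul_nonpos_right hab ha0
      rw [abs_of_pos ha0, abs_of_nonpos hb0, abs_of_nonneg (by nlinarith)]
      ring
  have hD0 : A * round (θ * B) - B * round (θ * A) ≠ 0 := by
    rintro h
    rw [h, Int.cast_zero, eq_comm, ← abs_eq_zero, habs] at hD
    nlinarith [abs_pos.2 ha0, abs_nonneg b]
  have := one_le_abs_intCast hD0
  rw [hD, habs] at this
  nlinarith [abs_nonneg b, abs_nonneg a]

lemma one_le_two_mul_normZ {B k : ℕ}
    (hB : ∀ j, 0 < j → j < B → normZ (θ * B) < normZ (θ * j)) (hk : 0 < k) (hkB : k < B) :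
    1 ≤ 2 * B * normZ (θ * k) := by
  obtain ⟨A, hA0, hAB, hAmin, -⟩ := exists_best_approximation_le θ (N := B - 1) (by omega)
  have hAmin' : ∀ j, 0 < j → j < B → normZ (θ * A) ≤ normZ (θ * j) :=
    fun j hj hjB => hAmin j hj (by omega)
  calc 1 ≤ 2 * B * normZ (θ * A) :=
        one_le_two_mul_normZ_of_minimizer hA0 (by omega) hAmin' (hB A hA0 (by omega))
    _ ≤ 2 * B * normZ (θ * k) := by gcongr; exact hAmin' k hk hkB

end BestApproximation

def orbitGrid (θ ε : ℝ) : Set ℝ :=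
  {y | ∃ (k : ℕ) (p : ℤ), y = θ * k - p ∧ ∀ j : ℕ, 0 < j → j ≤ k → ε ≤ normZ (θ * j)}

lemma le_abs_sub_of_mem_orbitGrid {θ ε y y' : ℝ} (hε : ε ≤ 1) (hy : y ∈ orbitGrid θ ε)
    (hy' : y' ∈ orbitGrid θ ε) (hne : y ≠ y') : ε ≤ |y - y'| := by
  obtain ⟨k, p, rfl, hk⟩ := hy
  obtain ⟨k', p', rfl, hk'⟩ := hy'
  wlog hkk : k ≤ k' generalizing k k' p p'
  · rw [abs_sub_comm]
    exact this k' p' hk' k p hk hne.symm (by omega)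
  rcases hkk.eq_or_lt with rfl | hlt
  · have hp : p' - p ≠ 0 := sub_ne_zero.2 fun h => hne (by rw [h])
    calc ε ≤ 1 := hε
      _ ≤ |((p' - p : ℤ) : ℝ)| := one_le_abs_intCast hp
      _ = |θ * k - p - (θ * k - p')| := by congr 1; push_cast; ring
  · calc ε ≤ normZ (θ * (k' - k : ℕ)) := hk' _ (by omega) (by omega)
      _ ≤ |θ * (k' - k : ℕ) - (p' - p : ℤ)| := normZ_le_abs_sub _ _
      _ = |θ * k - p - (θ * k' - p')| := by
        rw [abs_sub_comm]
        congr 1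
        push_cast [Nat.cast_sub hlt.le]
        ring

def OrbitClearance (θ μ x : ℝ) : Prop :=
  ∀ (N : ℕ) (s : ℝ), 0 < s → s ≤ 1 → (∀ k : ℕ, 0 < k → k < N → s ≤ normZ (θ * k)) →
    ∀ k < N, ∀ p : ℤ, μ * s ≤ |θ * k - p - x|

lemma OrbitClearance.div_two_mul_le {θ μ x : ℝ} (hx : OrbitClearance θ μ x) {A : ℕ}
    (hA0 : 0 < A) (hAbest : ∀ k, 0 < k → k < A → normZ (θ * A) < normZ (θ * k)) {k : ℕ}
    (hk : k < A) (p : ℤ) : μ / (2 * A) ≤ |θ * k - p - x| := by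
  have hA : (1 : ℝ) ≤ A := by exact_mod_cast hA0
  rw [← mul_one_div]
  refine hx A _ (by positivity) ?_ (fun j hj hjA => ?_) k hk p
  · rw [div_le_one (by positivity)]
    linarith
  · rw [div_le_iff₀ (by positivity)]
    linarith [one_le_two_mul_normZ hAbest hj hjA]

lemma mem_badPlus_of_orbitClearance {θ μ x : ℝ} (hμ0 : 0 < μ) (hμ1 : μ ≤ 1)
    (hx : OrbitClearance θ μ x) : x ∈ BadPlus θ := by
  refine ⟨μ ^ 2 / 4, by positivity, fun q hq => le_ciInf fun p => ?_⟩
  obtain ⟨A, hA0, hAq, hAmin, hAbest⟩ := exists_best_approximation_le θ hq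
  have hAq' : (A : ℝ) ≤ q := by exact_mod_cast hAq
  set η := normZ (θ * A)
  obtain ⟨t, s, hsA, hq_eq⟩ : ∃ t s, s < A ∧ q = A * t + s :=
    ⟨q / A, q % A, Nat.mod_lt q hA0, (Nat.div_add_mod q A).symm⟩
  have ht : (1 : ℝ) ≤ t := by
    norm_cast
    by_contra! ht
    interval_cases t
    omega
  set p' := p - t * round (θ * A)
  have hsplit : θ * q - x - p
      = (θ * s - p' - x) + t * (θ * A - round (θ * A)) := by
    push_cast [p', hq_eq]
    ring
  have herr : |t * (θ * A - round (θ * A))| = t * η := by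
    rw [abs_mul, Nat.abs_cast, ← normZ_eq_abs_sub_round]
  set d := μ / (2 * A)
  have hAd : A * d = μ / 2 := by
    simp only [d]
    field_simp
  have hlevel : d ≤ |θ * s - p' - x| := hx.div_two_mul_le hA0 hAbest hsA p'
  rw [div_le_iff₀ (by positivity)]
  rcases le_or_gt (t * η) (d / 2) with hsmall | hlarge
  · have hfar : d / 2 ≤ |θ * q - x - p| := by
      rw [hsplit]
      linarith [abs_sub_abs_le_abs_add (θ * s - p' - x) (t * (θ * A - round (θ * A)))]
    nlinarith [mul_le_mul hfar hAq' (by positivity) (abs_nonneg _)]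
  · have hη0 : 0 < η :=
      pos_of_mul_pos_right ((by positivity : 0 < d / 2).trans hlarge) t.cast_nonneg
    have hfar : μ * η ≤ |θ * q - x - p| := by
      rw [sub_right_comm]
      exact hx (q + 1) η hη0 (normZ_le_one _) (fun k hk hkq => hAmin k hk (by omega)) q
        (by omega) p
    have hqη : A * t * η ≤ q * η := by
      gcongr
      rw [hq_eq]
      push_cast
      linarith [s.cast_nonneg (α := ℝ)]
    have hAtη : A * d / 2 < A * t * η := by
      rw [mul_assoc, mul_div_assoc]
      gcongr
    nlinarith [mul_le_mul_of_nonneg_right hfar (q.cast_nonneg (α := ℝ))]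

lemma exists_mul_pow_mem_Icc {r c s : ℝ} (hr : 0 < r) (hc0 : 0 < c) (hc1 : c < 1) (hs0 : 0 < s)
    (hs1 : s ≤ 1) : ∃ n : ℕ, min r c * s ≤ r * c ^ n ∧ r * c ^ n ≤ s := by
  classical
  have hex : ∃ n : ℕ, r * c ^ n ≤ s := by
    obtain ⟨n, hn⟩ := exists_pow_lt_of_lt_one (div_pos hs0 hr) hc1
    exact ⟨n, by rw [lt_div_iff₀ hr] at hn; linarith⟩
  refine ⟨Nat.find hex, ?_, Nat.find_spec hex⟩
  cases hn : Nat.find hex with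
  | zero =>
    rw [pow_zero, mul_one]
    nlinarith [min_le_left r c]
  | succ m =>
    have hlt : s < r * c ^ m := not_le.1 (Nat.find_min hex (by omega))
    rw [pow_succ, ← mul_assoc]
    nlinarith [min_le_right r c]

open Classical in
/-- When the points of `Z r` are more than `4r` apart, at most one of them lies within `2r` of
the centre of the Black ball `B`, and White moves to the end of `B` away from it. -/
noncomputable def dodgeMove (Z : ℝ → Set ℝ) (B : ℝ × ℝ) : ℝ × ℝ :=
  (if ∃ y ∈ Z B.2, |y - B.1| ≤ 2 * B.2 ∧ y ≤ B.1 then B.1 + 7 * B.2 / 8 else B.1 - 7 * B.2 / 8,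
    B.2 / 8)

noncomputable def dodge (Z : ℝ → Set ℝ) (l : List (ℝ × ℝ)) : ℝ × ℝ :=
  dodgeMove Z (l.getLastD (0, 1))

section Dodge

variable {Z : ℝ → Set ℝ}

lemma ballOf_dodgeMove_subset {B : ℝ × ℝ} (hB : 0 ≤ B.2) : ballOf (dodgeMove Z B) ⊆ ballOf B := by
  apply Metric.closedBall_subset_closedBall'
  simp only [dodgeMove, Real.dist_eq]
  split_ifs
  · rw [add_sub_cancel_left, abs_of_nonneg (by positivity)]
    linarith
  · rw [sub_sub_cancel_left, abs_neg, abs_of_nonneg (by positivity)]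
    linarith

lemma le_abs_sub_of_mem_ballOf_dodgeMove {B : ℝ × ℝ} {x y : ℝ} (hB : 0 ≤ B.2)
    (hZ : ∀ y ∈ Z B.2, ∀ y' ∈ Z B.2, y ≠ y' → 4 * B.2 < |y - y'|)
    (hx : x ∈ ballOf (dodgeMove Z B)) (hy : y ∈ Z B.2) : B.2 / 2 ≤ |x - y| := by
  have hxB : |x - B.1| ≤ B.2 := by
    simpa [ballOf, Real.dist_eq] using ballOf_dodgeMove_subset hB hx
  rw [ballOf, Metric.mem_closedBall, Real.dist_eq] at hx
  by_cases hfar : 2 * B.2 < |y - B.1|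
  · linarith [abs_sub_le y x B.1, abs_sub_comm x y]
  rw [not_lt] at hfar
  simp only [dodgeMove] at hx
  split_ifs at hx with hleft
  · obtain ⟨y₀, hy₀, hy₀B, hy₀le⟩ := hleft
    obtain rfl : y = y₀ := by
      by_contra hne
      linarith [hZ y hy y₀ hy₀ hne, abs_sub_le y B.1 y₀, abs_sub_comm B.1 y₀]
    rw [abs_le] at hx
    rw [le_abs]
    left
    linarith
  · push Not at hleft
    have := hleft y hy hfar
    rw [abs_le] at hx
    rw [le_abs]
    right
    linarith

lemma dodge_ofFn (B : ℕ → ℝ × ℝ) (n : ℕ) :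
    dodge Z (List.ofFn fun i : Fin (n + 1) => B i) = dodgeMove Z (B n) := by
  rw [dodge, List.getLastD_eq_getLast?, List.getLast?_eq_some_getLast (by simp),
    List.getLast_ofFn]
  simp

end Dodge

def BlackPlaysLegally (f : List (ℝ × ℝ) → ℝ × ℝ) (β : ℝ) (B : ℕ → ℝ × ℝ) : Prop :=
  ∀ n : ℕ, (B (n + 1)).2 = β * (f (List.ofFn fun i : Fin (n + 1) => B i)).2 ∧
    ballOf (B (n + 1)) ⊆ ballOf (f (List.ofFn fun i : Fin (n + 1) => B i))

section Play

variable {θ β : ℝ} {Z : ℝ → Set ℝ} {B : ℕ → ℝ × ℝ}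

lemma BlackPlaysLegally.radius_eq (hB : BlackPlaysLegally (dodge Z) β B) (n : ℕ) :
    (B n).2 = (B 0).2 * (β / 8) ^ n := by
  induction n with
  | zero => simp
  | succ n ih =>
    rw [(hB n).1, dodge_ofFn, pow_succ]
    simp only [dodgeMove, ih]
    ring

lemma BlackPlaysLegally.dodge_legal (hB : BlackPlaysLegally (dodge Z) β B) (hβ : 0 ≤ β)
    (hB0 : 0 < (B 0).2) (n : ℕ) :
    (dodge Z (List.ofFn fun i : Fin (n + 1) => B i)).2 = 1 / 8 * (B n).2 ∧
      ballOf (dodge Z (List.ofFn fun i : Fin (n + 1) => B i)) ⊆ ballOf (B n) := by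
  rw [dodge_ofFn]
  refine ⟨by simp only [dodgeMove]; ring, ballOf_dodgeMove_subset ?_⟩
  rw [hB.radius_eq]
  positivity

lemma BlackPlaysLegally.orbitClearance
    (hB : BlackPlaysLegally (dodge fun r => orbitGrid θ (5 * r)) β B) (hβ0 : 0 < β) (hβ1 : β < 1)
    (hB0 : 0 < (B 0).2) {x : ℝ} (hx : x ∈ ⋂ n, ballOf (B n)) :
    OrbitClearance θ (min (B 0).2 (β / 8) / 10) x := by
  intro N s hs0 hs1 hsN k hk p
  obtain ⟨n, hlow, hhigh⟩ := exists_mul_pow_mem_Icc hB0 (by positivity : 0 < β / 8)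
    (by linarith) (by positivity : 0 < s / 5) (by linarith)
  rw [← hB.radius_eq] at hlow hhigh
  have hr : 0 < (B n).2 := lt_of_lt_of_le (by positivity) hlow
  have hxW : x ∈ ballOf (dodgeMove (fun r => orbitGrid θ (5 * r)) (B n)) := by
    rw [← dodge_ofFn]
    exact (hB n).2 (Set.mem_iInter.1 hx (n + 1))
  have hmem : θ * k - p ∈ orbitGrid θ (5 * (B n).2) :=
    ⟨k, p, rfl, fun j hj hjk => by linarith [hsN j hj (by omega)]⟩
  have hsep : ∀ y ∈ orbitGrid θ (5 * (B n).2), ∀ y' ∈ orbitGrid θ (5 * (B n).2), y ≠ y' →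
      4 * (B n).2 < |y - y'| := fun y hy y' hy' hne => by
    linarith [le_abs_sub_of_mem_orbitGrid (by linarith) hy hy' hne]
  have := le_abs_sub_of_mem_ballOf_dodgeMove hr.le hsep hxW hmem
  rw [abs_sub_comm] at this
  linarith

end Play

/-- For any real number `θ`, `Bad⁺_θ` is a `1/8`-winning set. -/
theorem badPlus_is_one_eighth_winning (θ : ℝ) :
    SchmidtAlphaWinning (1 / 8) (BadPlus θ) := by
  intro β hβ0 hβ1
  refine ⟨dodge fun r => orbitGrid θ (5 * r), fun B hB0 hB => ⟨?_, fun x hx => ?_⟩⟩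
  · exact BlackPlaysLegally.dodge_legal hB hβ0.le hB0
  · have hμ : min (B 0).2 (β / 8) / 10 ≤ 1 := by linarith [min_le_right (B 0).2 (β / 8)]
    exact mem_badPlus_of_orbitClearance (by positivity) hμ
      (BlackPlaysLegally.orbitClearance hB hβ0 hβ1 hB0 hx)
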